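/- arXiv:2301.05876 — 5 statements merged into one kernel-verified Lean document; each statement's English description precedes it below -/
import Mathlib

section
/- Let K be a field of characteristic 2, V a K-vector space, Q a quadratic form on V with polar form f, and R = Rad(f). If the restriction of Q to R is anisotropic (Q(r) ≠ 0 for all nonzero r ∈ R) and (r_i)_{i∈I} is a K-basis of R, then the values Q(r_i) ∈ K are linearly independent over the subfield K² = {a² : a ∈ K}. In particular dim_K R ≤ [K : K²]. -/
universe u

/-- The subfield `K² = {a² : a ∈ K}` of a field `K` of characteristic 2. -/
def squaresSubfield (K : Type*) [Field K] [CharP K 2] : Subfield K where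
  carrier := {a : K | ∃ b : K, a = b ^ 2}
  mul_mem' := by rintro a b ⟨x, rfl⟩ ⟨y, rfl⟩; exact ⟨x * y, by ring⟩
  one_mem' := ⟨1, by ring⟩
  add_mem' := by
    rintro a b ⟨x, rfl⟩ ⟨y, rfl⟩
    exact ⟨x + y, by rw [CharTwo.add_sq]⟩
  zero_mem' := ⟨0, by ring⟩
  neg_mem' := by
    rintro a ⟨x, rfl⟩
    exact ⟨x, by rw [CharTwo.neg_eq]⟩
  inv_mem' := by
    rintro a ⟨x, rfl⟩
    exact ⟨x⁻¹, (inv_pow x 2).symm⟩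

/-- Let `K` be a field of characteristic 2, `Q` a quadratic form on `V` with polar form `f`,
and `R = Rad(f)`. If `Q` is anisotropic on `R` and `(r i)` is a `K`-basis of `R`, then the
values `Q (r i)` are linearly independent over the subfield `K²` of squares; in particular
`dim_K R ≤ [K : K²]`. -/
theorem basis_values_linearIndependent_over_squares
    {K V : Type u} [Field K] [CharP K 2] [AddCommGroup V] [Module K V]
    (Q : QuadraticForm K V)
    (R : Submodule K V)
    (hR : ∀ v : V, v ∈ R ↔ ∀ w : V, QuadraticMap.polar Q v w = 0)
    (haniso : ∀ r ∈ R, Q r = 0 → r = 0)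
    {I : Type u} (b : Module.Basis I K R) :
    LinearIndependent (squaresSubfield K) (fun i : I => Q (b i : V)) ∧
      Module.rank K R ≤ Module.rank (squaresSubfield K) K := by
  -- Q is additive when the first argument is in R
  have hadd : ∀ r ∈ R, ∀ w : V, Q (r + w) = Q r + Q w := by
    intro r hr w
    have hp := (hR r).mp hr w
    have : QuadraticMap.polar Q r w = Q (r + w) - Q r - Q w := rfl
    rw [this] at hp
    linear_combination hp
  -- key: Q of a K-linear combination of elements of R
  have key : ∀ (s : Finset I) (a : I → K),
      Q ((↑(∑ i ∈ s, a i • b i) : V)) = ∑ i ∈ s, (a i) ^ 2 * Q (b i : V) := by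
    intro s a
    classical
    induction s using Finset.induction_on with
    | empty => simp
    | insert j t hni ih =>
      rw [Finset.sum_insert hni, Finset.sum_insert hni, Submodule.coe_add,
        hadd _ ((a j • b j : R).2) _, Submodule.coe_smul, QuadraticMap.map_smul, ih]
      simp only [smul_eq_mul]; ring
  have hli : LinearIndependent (squaresSubfield K) (fun i : I => Q (b i : V)) := by
    rw [linearIndependent_iff']
    intro s g hg i hi
    choose a ha using fun i => (g i).2
    have hsum : (∑ i ∈ s, a i • b i : R) = 0 := by
      refine Subtype.ext (haniso _ (∑ i ∈ s, a i • b i : R).2 ?_)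
      rw [key s a]
      have : ∑ i ∈ s, (a i) ^ 2 * Q (b i : V) = ∑ i ∈ s, g i • Q (b i : V) := by
        refine Finset.sum_congr rfl fun i _ => ?_
        rw [← ha i]
        rfl
      rw [this]
      exact_mod_cast hg
    have := b.linearIndependent
    rw [linearIndependent_iff'] at this
    have hai := this s a hsum i hi
    ext
    simp [ha i, hai]
  refine ⟨hli, ?_⟩
  rw [← b.mk_eq_rank'']
  exact hli.cardinal_le_rank
end

section
/- Let K be a field of characteristic 2, R a K-vector space, and Q : R → K a map that is additive and satisfies Q(a·r) = a²·Q(r) for all a ∈ K, r ∈ R. If Q is injective on a basis's span in the sense that Q(r) = 0 implies r = 0, then dim_K R ≤ [K : K²], where [K : K²] is the dimension of K as a vector space over the field K² of squares. -/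
/-!
The hypotheses on `Q` say exactly that `Q` is semilinear along the Frobenius `a ↦ a²`, viewed as a
surjective ring map `K → K²`, and anisotropy makes it injective. An injective semilinear map along
a surjective ring map cannot increase rank.
-/

open Function

theorem rank_le_of_injective_of_surjective_semilinear
    {R R' : Type*} {M M' : Type v} [Ring R] [Ring R'] [AddCommGroup M] [AddCommGroup M']
    [Module R M] [Module R' M'] {σ : R →+* R'} (hσ : Surjective σ)
    (f : M →ₛₗ[σ] M') (hf : Injective f) :
    Module.rank R M ≤ Module.rank R' M' :=
  rank_le_of_surjective_injective σ f.toAddMonoidHom hσ hf f.map_smulₛₗ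

section Squares

variable (K : Type*) [Field K] [CharP K 2]

def frobeniusToSquares : K →+* squaresSubfield K :=
  (frobenius K 2).codRestrict _ fun a => ⟨a, rfl⟩

variable {K}

theorem frobeniusToSquares_surjective : Surjective (frobeniusToSquares K) := by
  rintro ⟨_, a, rfl⟩
  exact ⟨a, rfl⟩

end Squares

/-- Let `K` be a field of characteristic 2 and `Q : R → K` additive with `Q (a • r) = a² Q r`.
If `Q` is anisotropic (`Q r = 0 → r = 0`), then `dim_K R ≤ [K : K²]`. -/
theorem rank_le_of_anisotropic_semilinear
    {K R : Type u} [Field K] [CharP K 2] [AddCommGroup R] [Module K R]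
    (Q : R → K)
    (hadd : ∀ x y : R, Q (x + y) = Q x + Q y)
    (hsmul : ∀ (a : K) (x : R), Q (a • x) = a ^ 2 * Q x)
    (haniso : ∀ x : R, Q x = 0 → x = 0) :
    Module.rank K R ≤ Module.rank (squaresSubfield K) K := by
  let Qₛₗ : R →ₛₗ[frobeniusToSquares K] K :=
    { toFun := Q
      map_add' := hadd
      map_smul' := hsmul }
  exact rank_le_of_injective_of_surjective_semilinear frobeniusToSquares_surjective Qₛₗ
    ((injective_iff_map_eq_zero Qₛₗ).2 haniso)
end

section
/- Let V be a vector space with nondegenerate symmetric bilinear form f, W' ≤ V a subspace with dim Rad(f|_{W'}) = 1, say Rad(f|_{W'}) = span(r), and let p ∈ V with f(r,p) ≠ 0. Set W = W' + span(p) and suppose r ∉ W'' where W'' ≤ W' is a hyperplane of W' with Rad(f|_{W''}) = 0 and W' = W'' ⊕ span(r). Then the restriction f|_W is nondegenerate. -/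
/-! Pairing a radical vector `x = w' + c • p` of `W' + Kp` with `r` kills `c`; pairing the
remaining `x = w'' + a • r ∈ W'` with `W''` kills `w''`; pairing `x = a • r` with `p` kills `a`. -/

/-- The radical of the restriction of a bilinear form `f` to a subspace `W`. -/
def bilinRadRestrict {K V : Type*} [Field K] [AddCommGroup V] [Module K V]
    (f : V →ₗ[K] V →ₗ[K] K) (W : Submodule K V) : Submodule K V where
  carrier := {w | w ∈ W ∧ ∀ w' ∈ W, f w w' = 0}
  add_mem' := by
    rintro a b ⟨ha, ha'⟩ ⟨hb, hb'⟩
    exact ⟨W.add_mem ha hb, fun w hw => by simp [ha' w hw, hb' w hw]⟩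
  zero_mem' := ⟨W.zero_mem, fun w hw => by simp⟩
  smul_mem' := by
    rintro c a ⟨ha, ha'⟩
    exact ⟨W.smul_mem c ha, fun w hw => by simp [ha' w hw]⟩

section

open Submodule

variable {K V : Type*} [Field K] [AddCommGroup V] [Module K V] (f : V →ₗ[K] V →ₗ[K] K)

theorem inf_le_bilinRadRestrict_of_le {U W : Submodule K V} (hUW : U ≤ W) :
    bilinRadRestrict f W ⊓ U ≤ bilinRadRestrict f U :=
  fun _ ⟨⟨_, hx⟩, hxU⟩ => ⟨hxU, fun u hu => hx u (hUW hu)⟩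

variable {f}

theorem bilinRadRestrict_sup_span_le {U : Submodule K V} {r p : V} (hrU : r ∈ U)
    (hUr : ∀ u ∈ U, f u r = 0) (hpr : f p r ≠ 0) :
    bilinRadRestrict f (U ⊔ span K {p}) ≤ U := by
  rintro x ⟨hx, hxperp⟩
  obtain ⟨u, hu, _, hcp, rfl⟩ := mem_sup.mp hx
  obtain ⟨c, rfl⟩ := mem_span_singleton.mp hcp
  have hcpr : c * f p r = 0 := by
    simpa [hUr u hu] using hxperp r (mem_sup_left hrU)
  obtain rfl : c = 0 := (mul_eq_zero.mp hcpr).resolve_right hpr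
  simpa using hu

theorem bilinRadRestrict_sup_span_le_span {U : Submodule K V} {r : V}
    (hU : bilinRadRestrict f U = ⊥) (hrU : ∀ u ∈ U, f r u = 0) :
    bilinRadRestrict f (U ⊔ span K {r}) ≤ span K {r} := by
  rintro x ⟨hx, hxperp⟩
  obtain ⟨u, hu, _, har, rfl⟩ := mem_sup.mp hx
  obtain ⟨a, rfl⟩ := mem_span_singleton.mp har
  have hu_rad : u ∈ bilinRadRestrict f U := by
    refine ⟨hu, fun v hv => ?_⟩
    simpa [hrU v hv] using hxperp v (mem_sup_left hv)
  rw [hU, mem_bot] at hu_rad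
  simpa [hu_rad] using smul_mem _ a (mem_span_singleton_self r)

theorem bilinRadRestrict_eq_bot_of_le_span {W : Submodule K V} {r p : V}
    (hW : bilinRadRestrict f W ≤ span K {r}) (hpW : p ∈ W) (hrp : f r p ≠ 0) :
    bilinRadRestrict f W = ⊥ := by
  refine (Submodule.eq_bot_iff _).mpr fun x hx => ?_
  obtain ⟨a, rfl⟩ := mem_span_singleton.mp (hW hx)
  have harp : a * f r p = 0 := by simpa using hx.2 p hpW
  simp [(mul_eq_zero.mp harp).resolve_right hrp]

end

theorem rad_restrict_extension_eq_bot_general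
    {K V : Type*} [Field K] [AddCommGroup V] [Module K V]
    (f : V →ₗ[K] V →ₗ[K] K)
    (hsymm : ∀ x y : V, f x y = f y x)
    (W'' W' : Submodule K V) (r p : V)
    (hle : W'' ≤ W')
    (hW''rad : bilinRadRestrict f W'' = ⊥)
    (hrW' : r ∈ W')
    (hsum : W' = W'' ⊔ Submodule.span K {r})
    (hrperp : ∀ w ∈ W', f r w = 0)
    (hp : f r p ≠ 0) :
    bilinRadRestrict f (W' ⊔ Submodule.span K {p}) = ⊥ := by
  have hW_le_W' : bilinRadRestrict f (W' ⊔ Submodule.span K {p}) ≤ W' :=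
    bilinRadRestrict_sup_span_le hrW' (fun w hw => hsymm w r ▸ hrperp w hw) (hsymm r p ▸ hp)
  have hW'_le_span : bilinRadRestrict f W' ≤ Submodule.span K {r} :=
    hsum ▸ bilinRadRestrict_sup_span_le_span hW''rad fun w hw => hrperp w (hle hw)
  refine bilinRadRestrict_eq_bot_of_le_span ?_ (Submodule.mem_sup_right
    (Submodule.mem_span_singleton_self p)) hp
  calc bilinRadRestrict f (W' ⊔ Submodule.span K {p})
      ≤ bilinRadRestrict f (W' ⊔ Submodule.span K {p}) ⊓ W' := le_inf le_rfl hW_le_W'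
    _ ≤ bilinRadRestrict f W' := inf_le_bilinRadRestrict_of_le f le_sup_left
    _ ≤ Submodule.span K {r} := hW'_le_span

/-- Extending a subspace `W' = W'' ⊕ Kr` (with `f|_{W''}` nondegenerate and `r` in the
radical of `f|_{W'}`) by a vector `p` with `f r p ≠ 0` yields a subspace
`W = W' + Kp` on which `f` is nondegenerate. -/
theorem rad_restrict_extension_eq_bot
    {K V : Type*} [Field K] [AddCommGroup V] [Module K V]
    (f : V →ₗ[K] V →ₗ[K] K)
    (hsymm : ∀ x y : V, f x y = f y x)
    (hnd : ∀ v : V, (∀ w : V, f v w = 0) → v = 0)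
    (W'' W' : Submodule K V) (r p : V)
    (hle : W'' ≤ W')
    (hW''rad : bilinRadRestrict f W'' = ⊥)
    (hrW' : r ∈ W') (hrnot : r ∉ W'')
    (hsum : W' = W'' ⊔ Submodule.span K {r})
    (hrperp : ∀ w ∈ W', f r w = 0)
    (hp : f r p ≠ 0) :
    bilinRadRestrict f (W' ⊔ Submodule.span K {p}) = ⊥ :=
  rad_restrict_extension_eq_bot_general f hsymm W'' W' r p hle hW''rad hrW' hsum hrperp hp
end

section
/- Let (E_i)_{i∈I} be a chain of polar subspaces of a polar space P, each with the property that every hyperbolic line (double perp of two non-collinear points) consists of exactly 2 points. Then the union ⋃ E_i also has the property that every hyperbolic line consists of exactly 2 points. -/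
/-- The perp of `X` inside `T` with respect to a collinearity relation `col`. -/
def perpIn {P : Type*} (col : P → P → Prop) (T X : Set P) : Set P :=
  {t ∈ T | ∀ x ∈ X, col t x}

/-- The hyperbolic line of `a, b` computed inside `T`: the double perp `{a,b}^{⊥_T ⊥_T}`. -/
def hypLine {P : Type*} (col : P → P → Prop) (T : Set P) (a b : P) : Set P :=
  perpIn col T (perpIn col T {a, b})

/-! A point of the union lies, together with `a` and `b`, in a single member `E m`, and the
hyperbolic line only shrinks when passing from the union to `E m`, where it is `{a, b}`. -/

section HyperbolicLines

variable {P : Type*} {col : P → P → Prop}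

lemma hypLine_inter_subset_of_subset {S T : Set P} (hST : S ⊆ T) (a b : P) :
    hypLine col T a b ∩ S ⊆ hypLine col S a b := by
  rintro x ⟨⟨-, hx⟩, hxS⟩
  exact ⟨hxS, fun t ht => hx t ⟨hST ht.1, ht.2⟩⟩

lemma pair_subset_hypLine (hsymm : ∀ x y, col x y → col y x) {T : Set P} {a b : P}
    (ha : a ∈ T) (hb : b ∈ T) : {a, b} ⊆ hypLine col T a b := by
  rintro x (rfl | rfl)
  · exact ⟨ha, fun t ht => hsymm _ _ (ht.2 x (Set.mem_insert x _))⟩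
  · exact ⟨hb, fun t ht => hsymm _ _ (ht.2 x (Set.mem_insert_of_mem _ rfl))⟩

lemma Directed.hypLine_iUnion_eq_pair {ι : Type*} {E : ι → Set P}
    (hE : Directed (· ⊆ ·) E) (hsymm : ∀ x y, col x y → col y x)
    (h2 : ∀ i, ∀ a ∈ E i, ∀ b ∈ E i, ¬ col a b → hypLine col (E i) a b = {a, b})
    {a b : P} (ha : a ∈ ⋃ i, E i) (hb : b ∈ ⋃ i, E i) (hab : ¬ col a b) :
    hypLine col (⋃ i, E i) a b = {a, b} := by
  refine (pair_subset_hypLine hsymm ha hb).antisymm' fun x hx => ?_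
  obtain ⟨i, hai⟩ := Set.mem_iUnion.1 ha
  obtain ⟨j, hbj⟩ := Set.mem_iUnion.1 hb
  obtain ⟨k, hxk⟩ := Set.mem_iUnion.1 hx.1
  obtain ⟨l, hil, hjl⟩ := hE i j
  obtain ⟨m, hlm, hkm⟩ := hE l k
  have hxm := hypLine_inter_subset_of_subset (Set.subset_iUnion E m) a b ⟨hx, hkm hxk⟩
  rwa [h2 m a (hlm (hil hai)) b (hlm (hjl hbj)) hab] at hxm

end HyperbolicLines

/-- If every member of a chain `(E i)` of subspaces has all its hyperbolic lines of exactly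
two points, then so does the union `⋃ E i`. -/
theorem union_chain_hypLines_two_points
    {P ι : Type*} (col : P → P → Prop)
    (hcsymm : ∀ x y : P, col x y → col y x)
    (E : ι → Set P)
    (hchain : ∀ i j, E i ⊆ E j ∨ E j ⊆ E i)
    (h2 : ∀ i, ∀ a ∈ E i, ∀ b ∈ E i, ¬ col a b → hypLine col (E i) a b = {a, b}) :
    ∀ a ∈ ⋃ i, E i, ∀ b ∈ ⋃ i, E i, ¬ col a b →
      hypLine col (⋃ i, E i) a b = {a, b} := by
  have hdir : Directed (· ⊆ ·) E := fun i j =>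
    (hchain i j).elim (fun h => ⟨j, h, subset_rfl⟩) (fun h => ⟨i, subset_rfl, h⟩)
  exact fun a ha b hb hab => hdir.hypLine_iUnion_eq_pair hcsymm h2 ha hb hab
end

section
/- Let K be a field of characteristic 2 and Q a quadratic form on a K-vector space V with polar form f. Suppose dim Rad(f) = 1 with Rad(f) = span(r), and suppose V has a basis (e_i) consisting of Q-singular vectors. Write r in this basis; then r has a nonzero coordinate at some basis vector e_j, and for W = span of the remaining basis vectors, V = W ⊕ Rad(f) and the restriction of f to W is nondegenerate. -/
/-- Let `K` have characteristic 2, `Q` a quadratic form on `V` whose polar form `f` has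
one-dimensional radical `Rad(f) = K·r`, and let `(e i)` be a basis of `V` of `Q`-singular
vectors. Then `r` has a nonzero coordinate at some `e j`, and for `W` the span of the
remaining basis vectors, `V = W ⊕ Rad(f)` and `f` restricted to `W` is nondegenerate. -/
theorem complement_of_radical_from_singular_basis
    {K V : Type*} [Field K] [CharP K 2] [AddCommGroup V] [Module K V]
    (Q : QuadraticForm K V) (r : V) (hr : r ≠ 0)
    (hrad : ∀ v : V,
      (∀ w : V, QuadraticMap.polar Q v w = 0) ↔ v ∈ Submodule.span K ({r} : Set V))
    {I : Type*} (b : Module.Basis I K V) (hsing : ∀ i, Q (b i) = 0) :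
    ∃ j : I, b.repr r j ≠ 0 ∧
      ∀ W : Submodule K V,
        W = Submodule.span K (Set.range fun i : {i : I // i ≠ j} => b i.1) →
          IsCompl W (Submodule.span K ({r} : Set V)) ∧
            (∀ w ∈ W, (∀ w' ∈ W, QuadraticMap.polar Q w w' = 0) → w = 0) := by
  -- find j with nonzero coordinate
  obtain ⟨j, hj⟩ : ∃ j, b.repr r j ≠ 0 := by
    by_contra h
    push_neg at h
    apply hr
    have : b.repr r = 0 := Finsupp.ext h
    simpa using congrArg b.repr.symm this
  refine ⟨j, hj, ?_⟩
  rintro W rfl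
  set W := Submodule.span K (Set.range fun i : {i : I // i ≠ j} => b i.1) with hW
  -- membership in W iff j-coordinate is zero
  have hmem : ∀ v : V, v ∈ W ↔ b.repr v j = 0 := by
    intro v
    constructor
    · intro hv
      induction hv using Submodule.span_induction with
      | mem x hx =>
        obtain ⟨i, rfl⟩ := hx
        simp [Finsupp.single_apply, i.2]
      | zero => simp
      | add x y _ _ hx hy => simp [hx, hy]
      | smul c x _ hx => simp [hx]
    · intro hv
      have := b.linearCombination_repr v
      rw [Finsupp.linearCombination_apply, Finsupp.sum] at this
      rw [← this]
      apply Submodule.sum_mem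
      intro i hi
      have hij : i ≠ j := by
        rintro rfl; exact (Finsupp.mem_support_iff.mp hi) hv
      exact Submodule.smul_mem _ _ (Submodule.subset_span ⟨⟨i, hij⟩, rfl⟩)
  have hrW : r ∉ W := fun h => hj ((hmem r).mp h)
  have hdisj : Disjoint W (Submodule.span K ({r} : Set V)) := by
    rw [Submodule.disjoint_def]
    intro x hxW hxr
    obtain ⟨c, rfl⟩ := Submodule.mem_span_singleton.mp hxr
    have := (hmem _).mp hxW
    simp only [map_smul, Finsupp.smul_apply, smul_eq_mul] at this
    rcases mul_eq_zero.mp this with hc | hc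
    · simp [hc]
    · exact absurd hc hj
  have hsup : W ⊔ Submodule.span K ({r} : Set V) = ⊤ := by
    rw [eq_top_iff, ← b.span_eq, Submodule.span_le]
    rintro _ ⟨i, rfl⟩
    by_cases hij : i = j
    · rw [hij]
      have hv : r - (b.repr r j) • b j ∈ W := by
        rw [hmem]; simp
      have : b j = (b.repr r j)⁻¹ • (r - (r - (b.repr r j) • b j)) := by
        rw [sub_sub_cancel, smul_smul, inv_mul_cancel₀ hj, one_smul]
      rw [this]
      exact Submodule.smul_mem _ _ (Submodule.sub_mem _
        (Submodule.mem_sup_right (Submodule.mem_span_singleton_self r))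
        (Submodule.mem_sup_left hv))
    · exact Submodule.mem_sup_left (Submodule.subset_span ⟨⟨i, hij⟩, rfl⟩)
  have hpolr : ∀ w : V, QuadraticMap.polar Q r w = 0 :=
    (hrad r).mpr (Submodule.mem_span_singleton_self r)
  refine ⟨⟨hdisj, codisjoint_iff.mpr hsup⟩, ?_⟩
  intro w hwW hw
  have hwrad : ∀ u : V, QuadraticMap.polar Q w u = 0 := by
    intro u
    have hu : u ∈ W ⊔ Submodule.span K ({r} : Set V) := hsup ▸ Submodule.mem_top
    obtain ⟨a, haW, c, hcr, rfl⟩ := Submodule.mem_sup.mp hu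
    obtain ⟨t, rfl⟩ := Submodule.mem_span_singleton.mp hcr
    rw [QuadraticMap.polar_add_right, hw a haW, QuadraticMap.polar_smul_right,
      QuadraticMap.polar_comm, hpolr]
    simp
  have : w ∈ Submodule.span K ({r} : Set V) := (hrad w).mp hwrad
  exact hdisj.le_bot ⟨hwW, this⟩ |>.symm ▸ rfl
end
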